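/- arXiv:2601.17563 — 4 statements merged into one kernel-verified Lean document; each statement's English description precedes it below -/
import Mathlib

section
/- Let E and F be topological spaces and let f : E × F → ℝ be a continuous function. Let (x_k) in E and (y_k) in F be sequences produced by alternating exact minimization, i.e., for every k, f(x_{k+1}, y_k) ≤ f(x, y_k) for all x ∈ E, and f(x_{k+1}, y_{k+1}) ≤ f(x_{k+1}, y) for all y ∈ F. If x_k → x* and y_k → y*, then (x*, y*) is a coordinatewise minimizer of f: f(x*, y*) ≤ f(x, y*) for all x ∈ E, and f(x*, y*) ≤ f(x*, y) for all y ∈ F. -/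
/-!
The inequalities `f (x (k+1), y k) ≤ f (x', y k)` and `f (x (k+1), y (k+1)) ≤ f (x (k+1), y')`
pass to the limit by continuity of `f`, since `(x (k+1), y k)` and `(x (k+1), y (k+1))` both
tend to `(xs, ys)`; the second inequality is the first one for `f ∘ Prod.swap`.
-/

open Filter Topology

section PartialMinimizer

variable {ι E F α : Type*} [TopologicalSpace E] [TopologicalSpace F]
  [TopologicalSpace α] [Preorder α] [OrderClosedTopology α]

theorem Continuous.le_of_tendsto_of_forall_le {f : E × F → α} (hf : Continuous f)
    {l : Filter ι} [l.NeBot] {x : ι → E} {y : ι → F} {xs : E} {ys : F}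
    (hxs : Tendsto x l (𝓝 xs)) (hys : Tendsto y l (𝓝 ys))
    (hmin : ∀ i x', f (x i, y i) ≤ f (x', y i)) (x' : E) :
    f (xs, ys) ≤ f (x', ys) :=
  le_of_tendsto_of_tendsto'
    ((hf.tendsto _).comp (hxs.prodMk_nhds hys))
    ((hf.tendsto _).comp (tendsto_const_nhds.prodMk_nhds hys))
    (fun i => hmin i x')

end PartialMinimizer

/-- Limit points of alternating exact minimization are coordinatewise minimizers. -/
theorem alternating_minimization_limit_coordinatewise_min
    {E F : Type*} [TopologicalSpace E] [TopologicalSpace F]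
    (f : E × F → ℝ) (hf : Continuous f) (x : ℕ → E) (y : ℕ → F)
    (hx : ∀ k, ∀ x' : E, f (x (k + 1), y k) ≤ f (x', y k))
    (hy : ∀ k, ∀ y' : F, f (x (k + 1), y (k + 1)) ≤ f (x (k + 1), y'))
    (xs : E) (ys : F)
    (hxs : Tendsto x atTop (𝓝 xs)) (hys : Tendsto y atTop (𝓝 ys)) :
    (∀ x' : E, f (xs, ys) ≤ f (x', ys)) ∧ (∀ y' : F, f (xs, ys) ≤ f (xs, y')) := by
  have hxs' : Tendsto (fun k => x (k + 1)) atTop (𝓝 xs) := hxs.comp (tendsto_add_atTop_nat 1)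
  have hys' : Tendsto (fun k => y (k + 1)) atTop (𝓝 ys) := hys.comp (tendsto_add_atTop_nat 1)
  exact ⟨hf.le_of_tendsto_of_forall_le hxs' hys hx,
    (hf.comp continuous_swap).le_of_tendsto_of_forall_le hys' hxs' hy⟩
end

section
/- Let P and Q be probability measures on a measurable space X, let μ = P + Q, and let p and q denote (real-valued versions of) the Radon–Nikodym derivatives dP/dμ and dQ/dμ. Then for every measurable D : X → ℝ with 0 < D(x) < 1 for all x, such that log ∘ D is P-integrable, log ∘ (1 − D) is Q-integrable, log ∘ p is P-integrable, and log ∘ q is Q-integrable, we have ∫ log(D) dP + ∫ log(1 − D) dQ ≤ ∫ log(p) dP + ∫ log(q) dQ. In particular the discriminator D* = p = dP/d(P+Q) maximizes the adversarial objective among all discriminators with values in (0, 1). -/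
/-! The objective is linear in the pair of densities: writing `p = dP/dμ` and `q = dQ/dμ` for
`μ = P + Q`, it equals `∫ (p log D + q log (1 - D)) dμ`, and `p + q = 1` holds `μ`-a.e.
For fixed weights `a + b = 1`, the function `y ↦ a log y + b log (1 - y)` on `(0, 1)` is maximal
at `y = a` (Gibbs' inequality on two points, from `log x ≤ x - 1`), so the integrand is
dominated pointwise by `p log p + q log q`. -/

open MeasureTheory

lemma Real.mul_log_le_mul_log_add_sub {a y : ℝ} (ha : 0 ≤ a) (hy : 0 < y) :
    a * Real.log y ≤ a * Real.log a + (y - a) := by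
  rcases ha.eq_or_lt with rfl | ha
  · simpa using hy.le
  have h := Real.log_le_sub_one_of_pos (div_pos hy ha)
  rw [Real.log_div hy.ne' ha.ne'] at h
  have hmul : a * (y / a - 1) = y - a := by field_simp
  nlinarith [mul_le_mul_of_nonneg_left h ha.le]

lemma Real.mul_log_add_mul_log_one_sub_le {a b y : ℝ} (ha : 0 ≤ a) (hb : 0 ≤ b)
    (hab : a + b = 1) (hy₀ : 0 < y) (hy₁ : y < 1) :
    a * Real.log y + b * Real.log (1 - y) ≤ a * Real.log a + b * Real.log b := by
  have h₁ := Real.mul_log_le_mul_log_add_sub ha hy₀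
  have h₂ := Real.mul_log_le_mul_log_add_sub hb (sub_pos.2 hy₁)
  linarith

namespace MeasureTheory.Measure

variable {X : Type*} [MeasurableSpace X]

lemma toReal_rnDeriv_add_toReal_rnDeriv_ae_eq_one (P Q : Measure X) [SigmaFinite P]
    [SigmaFinite Q] :
    ∀ᵐ x ∂(P + Q), (P.rnDeriv (P + Q) x).toReal + (Q.rnDeriv (P + Q) x).toReal = 1 := by
  filter_upwards [P.rnDeriv_add' Q (P + Q), (P + Q).rnDeriv_self, P.rnDeriv_lt_top (P + Q),
    Q.rnDeriv_lt_top (P + Q)] with x hadd hself hP hQ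
  rw [← ENNReal.toReal_add hP.ne hQ.ne, ← Pi.add_apply, ← hadd, hself, ENNReal.toReal_one]

end MeasureTheory.Measure

section DensityComparison

variable {X : Type*} [MeasurableSpace X] {P Q μ : Measure X}
  [P.HaveLebesgueDecomposition μ] [SigmaFinite P] [Q.HaveLebesgueDecomposition μ] [SigmaFinite Q]

lemma integrable_rnDeriv_mul_add_rnDeriv_mul_and_integral_eq (hPμ : P ≪ μ) (hQμ : Q ≪ μ)
    {f g : X → ℝ} (hf : Integrable f P) (hg : Integrable g Q) :
    Integrable (fun x => (P.rnDeriv μ x).toReal * f x + (Q.rnDeriv μ x).toReal * g x) μ ∧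
      ∫ x, f x ∂P + ∫ x, g x ∂Q =
        ∫ x, ((P.rnDeriv μ x).toReal * f x + (Q.rnDeriv μ x).toReal * g x) ∂μ := by
  have hpf : Integrable (fun x => (P.rnDeriv μ x).toReal * f x) μ :=
    (integrable_rnDeriv_smul_iff hPμ).2 hf
  have hqg : Integrable (fun x => (Q.rnDeriv μ x).toReal * g x) μ :=
    (integrable_rnDeriv_smul_iff hQμ).2 hg
  refine ⟨hpf.add hqg, ?_⟩
  rw [integral_add hpf hqg]
  exact congrArg₂ (· + ·) (integral_rnDeriv_smul hPμ).symm (integral_rnDeriv_smul hQμ).symm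

lemma integral_add_integral_le_of_ae_rnDeriv_le (hPμ : P ≪ μ) (hQμ : Q ≪ μ)
    {f g f' g' : X → ℝ} (hf : Integrable f P) (hg : Integrable g Q) (hf' : Integrable f' P)
    (hg' : Integrable g' Q)
    (h : ∀ᵐ x ∂μ, (P.rnDeriv μ x).toReal * f x + (Q.rnDeriv μ x).toReal * g x ≤
      (P.rnDeriv μ x).toReal * f' x + (Q.rnDeriv μ x).toReal * g' x) :
    ∫ x, f x ∂P + ∫ x, g x ∂Q ≤ ∫ x, f' x ∂P + ∫ x, g' x ∂Q := by
  obtain ⟨hint, heq⟩ := integrable_rnDeriv_mul_add_rnDeriv_mul_and_integral_eq hPμ hQμ hf hg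
  obtain ⟨hint', heq'⟩ := integrable_rnDeriv_mul_add_rnDeriv_mul_and_integral_eq hPμ hQμ hf' hg'
  rw [heq, heq']
  exact integral_mono_ae hint hint' h

end DensityComparison

/-- The GAN adversarial objective `∫ log D dP + ∫ log (1 - D) dQ` over
discriminators `D` with values in `(0, 1)` is maximized by the discriminator
`D* = dP/d(P+Q)`, whose value is `∫ log p dP + ∫ log q dQ`. -/
theorem optimal_discriminator_maximizes_adversarial_objective
    {X : Type*} [MeasurableSpace X] (P Q : Measure X)
    [IsProbabilityMeasure P] [IsProbabilityMeasure Q]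
    (p q : X → ℝ)
    (hp : p = fun x => (P.rnDeriv (P + Q) x).toReal)
    (hq : q = fun x => (Q.rnDeriv (P + Q) x).toReal) :
    ∀ D : X → ℝ, Measurable D → (∀ x, 0 < D x) → (∀ x, D x < 1) →
      Integrable (fun x => Real.log (D x)) P →
      Integrable (fun x => Real.log (1 - D x)) Q →
      Integrable (fun x => Real.log (p x)) P →
      Integrable (fun x => Real.log (q x)) Q →
      ∫ x, Real.log (D x) ∂P + ∫ x, Real.log (1 - D x) ∂Q ≤
        ∫ x, Real.log (p x) ∂P + ∫ x, Real.log (q x) ∂Q := by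
  intro D _ hD₀ hD₁ hlogD hlog1D hlogp hlogq
  subst hp hq
  refine integral_add_integral_le_of_ae_rnDeriv_le (Measure.AbsolutelyContinuous.rfl.add_right Q)
    (Measure.AbsolutelyContinuous.rfl.add_right' P) hlogD hlog1D hlogp hlogq ?_
  filter_upwards [Measure.toReal_rnDeriv_add_toReal_rnDeriv_ae_eq_one P Q] with x hx
  exact Real.mul_log_add_mul_log_one_sub_le ENNReal.toReal_nonneg ENNReal.toReal_nonneg hx
    (hD₀ x) (hD₁ x)
end

section
/- Let P and Q be probability measures on a measurable space X and let M = (1/2)·(P + Q) be their mixture. Let p and q denote (real-valued versions of) the Radon–Nikodym derivatives dP/d(P+Q) and dQ/d(P+Q), and assume the Kullback–Leibler divergences KL(P ‖ M) and KL(Q ‖ M) are finite and that log ∘ p is P-integrable and log ∘ q is Q-integrable. Then the value of the adversarial objective at the optimal discriminator satisfies ∫ log(p) dP + ∫ log(q) dQ = KL(P ‖ M) + KL(Q ‖ M) − log 4. Consequently, minimizing this value over Q is equivalent to minimizing the Jensen–Shannon divergence JSD(P ‖ Q) = (1/2)·KL(P ‖ M) + (1/2)·KL(Q ‖ M). -/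
/-!
Since `M = (1/2)(P + Q)`, the density of `P` with respect to `M` is `2 p`, so
`KL(P ‖ M) = log 2 + ∫ log p dP`, and likewise `KL(Q ‖ M) = log 2 + ∫ log q dQ`.
Adding the two identities gives the value `KL(P ‖ M) + KL(Q ‖ M) - log 4`, which is
`2 JSD(P ‖ Q) - log 4`.
-/

open MeasureTheory ENNReal

/-- Real-valued Kullback–Leibler divergence `KL(P ‖ M) = ∫ log (dP/dM) dP`. -/
noncomputable def klDivReal {X : Type*} [MeasurableSpace X] (P M : Measure X) : ℝ :=
  ∫ x, Real.log ((P.rnDeriv M x).toReal) ∂P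

/-- Jensen–Shannon divergence
`JSD(P ‖ Q) = (1/2) KL(P ‖ M) + (1/2) KL(Q ‖ M)` with `M = (1/2)(P + Q)`. -/
noncomputable def jsDivReal {X : Type*} [MeasurableSpace X] (P Q : Measure X) : ℝ :=
  (1 / 2) * klDivReal P (((1 : ℝ≥0∞) / 2) • (P + Q)) +
    (1 / 2) * klDivReal Q (((1 : ℝ≥0∞) / 2) • (P + Q))

section ScaledReference

variable {X : Type*} [MeasurableSpace X] {μ ν : Measure X} {c : ℝ≥0∞}

lemma log_rnDeriv_smul_right_ae [IsFiniteMeasure μ] [SigmaFinite ν] (hac : μ ≪ ν)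
    (hc0 : c ≠ 0) (hctop : c ≠ ∞) :
    ∀ᵐ x ∂μ, Real.log ((μ.rnDeriv (c • ν) x).toReal)
      = Real.log ((μ.rnDeriv ν x).toReal) - Real.log c.toReal := by
  filter_upwards [hac.ae_le (Measure.rnDeriv_smul_right_of_ne_top μ ν hc0 hctop),
    Measure.rnDeriv_pos hac, hac.ae_le (Measure.rnDeriv_lt_top μ ν)] with x hx hpos hlt
  have hc : c⁻¹.toReal ≠ 0 := (ENNReal.toReal_pos (ENNReal.inv_ne_zero.2 hctop)
    (ENNReal.inv_ne_top.2 hc0)).ne'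
  rw [hx, Pi.smul_apply, smul_eq_mul, ENNReal.toReal_mul,
    Real.log_mul hc (ENNReal.toReal_pos hpos.ne' hlt.ne).ne', ENNReal.toReal_inv, Real.log_inv]
  ring

lemma klDivReal_smul_right [IsProbabilityMeasure μ] [SigmaFinite ν] (hac : μ ≪ ν)
    (hc0 : c ≠ 0) (hctop : c ≠ ∞)
    (hint : Integrable (fun x => Real.log ((μ.rnDeriv ν x).toReal)) μ) :
    klDivReal μ (c • ν) = klDivReal μ ν - Real.log c.toReal := by
  rw [klDivReal, integral_congr_ae (log_rnDeriv_smul_right_ae hac hc0 hctop),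
    integral_sub hint (integrable_const _), integral_const, probReal_univ, one_smul, klDivReal]

end ScaledReference

theorem adversarial_value_eq_jsd_general
    {X : Type*} [MeasurableSpace X] (P Q : Measure X)
    [IsProbabilityMeasure P] [IsProbabilityMeasure Q]
    (M : Measure X) (hM : M = ((1 : ℝ≥0∞) / 2) • (P + Q))
    (p q : X → ℝ)
    (hp : p = fun x => (P.rnDeriv (P + Q) x).toReal)
    (hq : q = fun x => (Q.rnDeriv (P + Q) x).toReal)
    (hplog : Integrable (fun x => Real.log (p x)) P)
    (hqlog : Integrable (fun x => Real.log (q x)) Q) :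
    ∫ x, Real.log (p x) ∂P + ∫ x, Real.log (q x) ∂Q =
        klDivReal P M + klDivReal Q M - Real.log 4 ∧
      ∫ x, Real.log (p x) ∂P + ∫ x, Real.log (q x) ∂Q =
        2 * jsDivReal P Q - Real.log 4 := by
  subst hp hq hM
  have hlog_half : Real.log ((1 : ℝ≥0∞) / 2).toReal = -Real.log 2 := by
    rw [one_div, ENNReal.toReal_inv, Real.log_inv, ENNReal.toReal_ofNat]
  have hlog4 : Real.log 4 = 2 * Real.log 2 := by
    rw [show (4 : ℝ) = 2 ^ 2 by norm_num, Real.log_pow, Nat.cast_ofNat]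
  have hKLP := klDivReal_smul_right (c := 1 / 2)
    (Measure.AbsolutelyContinuous.rfl.add_right Q) (by norm_num) (by norm_num) hplog
  have hKLQ := klDivReal_smul_right (c := 1 / 2)
    (Measure.le_add_left le_rfl).absolutelyContinuous (by norm_num) (by norm_num) hqlog
  rw [hlog_half] at hKLP hKLQ
  refine ⟨?_, ?_⟩
  · rw [hKLP, hKLQ, hlog4, klDivReal, klDivReal]; ring
  · rw [jsDivReal, hKLP, hKLQ, hlog4, klDivReal, klDivReal]; ring

/-- The value of the adversarial objective at the optimal discriminator equals
`KL(P ‖ M) + KL(Q ‖ M) - log 4 = 2 ⬝ JSD(P ‖ Q) - log 4`, where `M = (1/2)(P + Q)`. -/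
theorem adversarial_value_eq_jsd
    {X : Type*} [MeasurableSpace X] (P Q : Measure X)
    [IsProbabilityMeasure P] [IsProbabilityMeasure Q]
    (M : Measure X) (hM : M = ((1 : ℝ≥0∞) / 2) • (P + Q))
    (p q : X → ℝ)
    (hp : p = fun x => (P.rnDeriv (P + Q) x).toReal)
    (hq : q = fun x => (Q.rnDeriv (P + Q) x).toReal)
    (hKLP : Integrable (fun x => Real.log ((P.rnDeriv M x).toReal)) P)
    (hKLQ : Integrable (fun x => Real.log ((Q.rnDeriv M x).toReal)) Q)
    (hplog : Integrable (fun x => Real.log (p x)) P)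
    (hqlog : Integrable (fun x => Real.log (q x)) Q) :
    ∫ x, Real.log (p x) ∂P + ∫ x, Real.log (q x) ∂Q =
        klDivReal P M + klDivReal Q M - Real.log 4 ∧
      ∫ x, Real.log (p x) ∂P + ∫ x, Real.log (q x) ∂Q =
        2 * jsDivReal P Q - Real.log 4 :=
  adversarial_value_eq_jsd_general P Q M hM p q hp hq hplog hqlog
end

section
/- Let S and A be real normed vector spaces and let T : S × A → S satisfy ‖T(s, a) − T(s̄, ā)‖ ≤ L_s·‖s − s̄‖ + L_a·‖a − ā‖ for all s, s̄ ∈ S and a, ā ∈ A, with constants L_s, L_a ≥ 0. Let π, π_E : S → A be policies with sup_{s} ‖π(s) − π_E(s)‖ ≤ ε, and suppose π_E is K-Lipschitz. Define trajectories from a common initial state s_0 = ŝ_0 by s_{t+1} = T(s_t, π(s_t)) and ŝ_{t+1} = T(ŝ_t, π_E(ŝ_t)). Then for every t, ‖s_t − ŝ_t‖ ≤ L_a·ε·∑_{i<t} (L_s + L_a·K)^i. -/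
/-! The error `e t = ‖s t - sE t‖` obeys the one-step recursion
`e (t + 1) ≤ (Ls + La * K) * e t + La * ε`: the dynamics amplify the current state error by `Ls`
and the action error by `La`, and the action error splits, via the teacher's action at the agent's
state, into the policy gap `ε` plus `K * e t`. Unrolling this affine recursion from `e 0 = 0`
gives the geometric sum. -/

open Finset

theorem le_pow_mul_add_mul_geom_sum {R : Type*} [CommSemiring R] [PartialOrder R]
    [IsOrderedRing R] {u : ℕ → R} {c b : R} (hc : 0 ≤ c) (hu : ∀ n, u (n + 1) ≤ c * u n + b)
    (n : ℕ) : u n ≤ c ^ n * u 0 + b * ∑ i ∈ range n, c ^ i := by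
  induction n with
  | zero => simp
  | succ n ih =>
    calc u (n + 1) ≤ c * u n + b := hu n
      _ ≤ c * (c ^ n * u 0 + b * ∑ i ∈ range n, c ^ i) + b := by gcongr
      _ = c ^ (n + 1) * u 0 + b * ∑ i ∈ range (n + 1), c ^ i := by
        rw [geom_sum_succ]; ring

section ClosedLoop

variable {S A : Type*} [SeminormedAddCommGroup S] [SeminormedAddCommGroup A]

theorem norm_sub_policy_le {π πE : S → A} {ε K : ℝ} (hclose : ∀ x, ‖π x - πE x‖ ≤ ε)
    (hπE : ∀ x y, ‖πE x - πE y‖ ≤ K * ‖x - y‖) (x y : S) :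
    ‖π x - πE y‖ ≤ ε + K * ‖x - y‖ :=
  calc ‖π x - πE y‖ ≤ ‖π x - πE x‖ + ‖πE x - πE y‖ := norm_sub_le_norm_sub_add_norm_sub _ _ _
    _ ≤ ε + K * ‖x - y‖ := add_le_add (hclose x) (hπE x y)

theorem norm_sub_closedLoop_le {T : S × A → S} {Ls La : ℝ} (hLa : 0 ≤ La)
    (hT : ∀ (x y : S) (a b : A), ‖T (x, a) - T (y, b)‖ ≤ Ls * ‖x - y‖ + La * ‖a - b‖)
    {π πE : S → A} {ε K : ℝ} (hclose : ∀ x, ‖π x - πE x‖ ≤ ε)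
    (hπE : ∀ x y, ‖πE x - πE y‖ ≤ K * ‖x - y‖) (x y : S) :
    ‖T (x, π x) - T (y, πE y)‖ ≤ (Ls + La * K) * ‖x - y‖ + La * ε :=
  calc ‖T (x, π x) - T (y, πE y)‖ ≤ Ls * ‖x - y‖ + La * ‖π x - πE y‖ := hT _ _ _ _
    _ ≤ Ls * ‖x - y‖ + La * (ε + K * ‖x - y‖) := by
      gcongr; exact norm_sub_policy_le hclose hπE x y
    _ = (Ls + La * K) * ‖x - y‖ + La * ε := by ring

end ClosedLoop

theorem trajectory_compounding_error_bound_general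
    {S A : Type*} [NormedAddCommGroup S]
    [NormedAddCommGroup A]
    (T : S × A → S) (Ls La : ℝ) (hLs : 0 ≤ Ls) (hLa : 0 ≤ La)
    (hT : ∀ (x y : S) (a b : A),
      ‖T (x, a) - T (y, b)‖ ≤ Ls * ‖x - y‖ + La * ‖a - b‖)
    (π πE : S → A) (ε : ℝ) (hclose : ∀ x : S, ‖π x - πE x‖ ≤ ε)
    (K : ℝ) (hK : 0 ≤ K) (hπE : ∀ x y : S, ‖πE x - πE y‖ ≤ K * ‖x - y‖)
    (s sE : ℕ → S) (h0 : s 0 = sE 0)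
    (hs : ∀ t, s (t + 1) = T (s t, π (s t)))
    (hsE : ∀ t, sE (t + 1) = T (sE t, πE (sE t))) :
    ∀ t, ‖s t - sE t‖ ≤ La * ε * ∑ i ∈ Finset.range t, (Ls + La * K) ^ i := by
  have hstep : ∀ t, ‖s (t + 1) - sE (t + 1)‖ ≤ (Ls + La * K) * ‖s t - sE t‖ + La * ε := by
    intro t
    rw [hs, hsE]
    exact norm_sub_closedLoop_le hLa hT hclose hπE _ _
  intro t
  simpa [h0] using le_pow_mul_add_mul_geom_sum (u := fun t ↦ ‖s t - sE t‖) (by positivity) hstep t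

/-- Compounding-error bound: if the dynamics `T` are Lipschitz in state and
action, the agent's policy `π` is uniformly `ε`-close to the `K`-Lipschitz
teacher policy `πE`, and both trajectories start from the same state, then
`‖s t - sE t‖ ≤ La * ε * ∑_{i<t} (Ls + La * K) ^ i` for every `t`. -/
theorem trajectory_compounding_error_bound
    {S A : Type*} [NormedAddCommGroup S] [NormedSpace ℝ S]
    [NormedAddCommGroup A] [NormedSpace ℝ A]
    (T : S × A → S) (Ls La : ℝ) (hLs : 0 ≤ Ls) (hLa : 0 ≤ La)
    (hT : ∀ (x y : S) (a b : A),
      ‖T (x, a) - T (y, b)‖ ≤ Ls * ‖x - y‖ + La * ‖a - b‖)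
    (π πE : S → A) (ε : ℝ) (hclose : ∀ x : S, ‖π x - πE x‖ ≤ ε)
    (K : ℝ) (hK : 0 ≤ K) (hπE : ∀ x y : S, ‖πE x - πE y‖ ≤ K * ‖x - y‖)
    (s sE : ℕ → S) (h0 : s 0 = sE 0)
    (hs : ∀ t, s (t + 1) = T (s t, π (s t)))
    (hsE : ∀ t, sE (t + 1) = T (sE t, πE (sE t))) :
    ∀ t, ‖s t - sE t‖ ≤ La * ε * ∑ i ∈ Finset.range t, (Ls + La * K) ^ i :=
  trajectory_compounding_error_bound_general T Ls La hLs hLa hT π πE ε hclose K hK hπE s sE h0 hs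
    hsE
end
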